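/- Let A be a positive normalized linear functional on L, let n be odd, let f ∈ C^n([a,b]) be n-convex, let 3 ≤ m ≤ n−1 with m odd, and let g ∈ L with f∘g ∈ L. Then (A(g)−a)·(f[a,a] − f[a,b]) + Σ_{k=2}^{m-1} (f^{(k)}(a)/k!) · A[(g−a1)^k] + Σ_{k=1}^{n-m} f[a,…,a (m times); b,…,b (k times)] · A[(g−a1)^m (g−b1)^{k−1}] ≤ LR(f,g,a,b,A) ≤ (b−A(g))·(f[a,b] − f[b,b]) + Σ_{k=2}^{m-1} (f^{(k)}(b)/k!) · A[(g−b1)^k] + Σ_{k=1}^{n-m} f[b,…,b (m times); a,…,a (k times)] · A[(g−b1)^m (g−a1)^{k−1}]. -/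

import Mathlib

/-!
Let `H u v` be the Hermite interpolant of `f` matching `f⁽ʲ⁾(a)` for `j < u` and `f⁽ʲ⁾(b)` for
`j < v`. It satisfies the Neville–Aitken recursion whose coefficients are the divided differences
`f[a,…,a (i times); b,…,b (j times)]`, and expanding that recursion from `a` gives the Newton form
`∑_{k<u} f⁽ᵏ⁾(a)/k! (x-a)^k + ∑_{k<v} f[a (u times); b (k+1 times)] (x-a)^u (x-b)^k`.
A generalized Rolle argument (`u + v + 1` zeros counted with multiplicity) gives the error formula
`f x - H u v x = f⁽ᵘ⁺ᵛ⁾(ξ)/(u+v)! · (x-a)^u (x-b)^v`. For `n`-convex `f`, `m` odd and `n - m` even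
this yields `H m (n-m) ≤ f ≤ H (n-m) m` on `[a, b]`. Applying the positive normalized functional `A`
at `g` and subtracting the chord part of `LR`, the Newton forms expanded from `a`, respectively
from `b`, are exactly the two bounds.
-/

/-- Divided difference of `f` at a (sorted) list of points, with repeated points
handled via derivatives (taken within the set `s`). -/
noncomputable def divDiff (s : Set ℝ) (f : ℝ → ℝ) : List ℝ → ℝ
  | [] => 0
  | [x] => f x
  | x :: y :: l =>
    if x = (y :: l).getLast (List.cons_ne_nil y l) then
      iteratedDerivWithin (l.length + 1) f s x / Nat.factorial (l.length + 1)
    else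
      (divDiff s f (y :: l) - divDiff s f (x :: (y :: l).dropLast)) /
        ((y :: l).getLast (List.cons_ne_nil y l) - x)
termination_by l => l.length
decreasing_by
  all_goals simp [List.length_dropLast]

open Polynomial Set Finset
open scoped Nat

namespace Polynomial
variable {R : Type*} [CommRing R]

lemma eval_iterate_derivative_eq_zero_of_pow_dvd {p : R[X]} {c : R} {u j : ℕ}
    (h : (X - C c) ^ u ∣ p) (hj : j < u) : (derivative^[j] p).eval c = 0 :=
  dvd_iff_isRoot.mp <| (dvd_pow_self _ (Nat.sub_ne_zero_of_lt hj)).trans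
    (pow_sub_dvd_iterate_derivative_of_pow_dvd j h)

lemma eval_iterate_derivative_sum_C_mul_X_sub_C_pow (c : R) (γ : ℕ → R) {u j : ℕ} (hj : j < u) :
    (derivative^[j] (∑ k ∈ range u, C (γ k) * (X - C c) ^ k)).eval c = j ! * γ j := by
  rw [iterate_derivative_sum, eval_finsetSum, sum_eq_single_of_mem j (mem_range.mpr hj)]
  · rw [iterate_derivative_C_mul, iterate_derivative_X_sub_pow_self]
    simp [mul_comm]
  · intro k _ hk
    rw [iterate_derivative_C_mul, iterate_derivative_X_sub_pow]
    rcases lt_or_gt_of_ne hk with h | h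
    · simp [Nat.descFactorial_eq_zero_iff_lt.mpr h]
    · simp [Nat.sub_ne_zero_of_lt h]

lemma Monic.iterate_derivative_natDegree {p : R[X]} (hp : p.Monic) :
    derivative^[p.natDegree] p = C (p.natDegree ! : R) := by
  rw [eq_C_of_natDegree_le_zero ((natDegree_iterate_derivative p _).trans (Nat.sub_self _).le),
    coeff_iterate_derivative, zero_add, Nat.descFactorial_self, hp.coeff_natDegree, nsmul_one]

end Polynomial

/-- `d u v` plays the role of the divided difference at `u` copies of `a` and `v` copies of `b`;
only the recursion between neighbouring entries is imposed. -/
def IsDivDiffTable (a b : ℝ) (d : ℕ → ℕ → ℝ) : Prop :=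
  ∀ u v, d (u + 1) (v + 1) = (d u (v + 1) - d (u + 1) v) / (b - a)

/-- The Neville–Aitken recursion for the Hermite interpolant with `u` conditions at `a` and `v` at
`b`; the boundary rows are Taylor polynomials with coefficients `d (k + 1) 0`, resp. `d 0 (k + 1)`. -/
noncomputable def hermiteInterp (a b : ℝ) (d : ℕ → ℕ → ℝ) : ℕ → ℕ → ℝ[X]
  | u, 0 => ∑ k ∈ range u, C (d (k + 1) 0) * (X - C a) ^ k
  | 0, v + 1 => ∑ k ∈ range (v + 1), C (d 0 (k + 1)) * (X - C b) ^ k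
  | u + 1, v + 1 => C (b - a)⁻¹ *
      ((X - C a) * hermiteInterp a b d u (v + 1) - (X - C b) * hermiteInterp a b d (u + 1) v)
termination_by u v => u + v

section Hermite
variable {a b : ℝ} {d : ℕ → ℕ → ℝ}

lemma IsDivDiffTable.swap (hd : IsDivDiffTable a b d) : IsDivDiffTable b a (fun u v => d v u) := by
  intro u v
  show d (v + 1) (u + 1) = (d (v + 1) u - d v (u + 1)) / (a - b)
  rw [hd, ← neg_sub b a, div_neg, ← neg_div, neg_sub]

lemma hermiteInterp_zero_right (u : ℕ) :
    hermiteInterp a b d u 0 = ∑ k ∈ range u, C (d (k + 1) 0) * (X - C a) ^ k := by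
  rw [hermiteInterp]

lemma hermiteInterp_zero_left (v : ℕ) :
    hermiteInterp a b d 0 v = ∑ k ∈ range v, C (d 0 (k + 1)) * (X - C b) ^ k := by
  cases v with
  | zero => rw [hermiteInterp, range_zero, sum_empty, sum_empty]
  | succ v => rw [hermiteInterp]

lemma hermiteInterp_succ_succ (u v : ℕ) :
    hermiteInterp a b d (u + 1) (v + 1) = C (b - a)⁻¹ *
      ((X - C a) * hermiteInterp a b d u (v + 1) - (X - C b) * hermiteInterp a b d (u + 1) v) := by
  rw [hermiteInterp]

lemma hermiteInterp_swap (u v : ℕ) :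
    hermiteInterp a b d u v = hermiteInterp b a (fun u v => d v u) v u := by
  induction u, v using hermiteInterp.induct with
  | case1 u => rw [hermiteInterp_zero_right, hermiteInterp_zero_left]
  | case2 v => rw [hermiteInterp_zero_left, hermiteInterp_zero_right]
  | case3 u v ih₁ ih₂ =>
    rw [hermiteInterp_succ_succ, hermiteInterp_succ_succ, ih₁, ih₂, ← neg_sub a b, inv_neg, C_neg]
    ring

lemma hermiteInterp_succ_right_sub (hab : a ≠ b) (hd : IsDivDiffTable a b d) (u v : ℕ) :
    hermiteInterp a b d u (v + 1) - hermiteInterp a b d u v =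
      C (d u (v + 1)) * (X - C a) ^ u * (X - C b) ^ v := by
  induction h : u + v using Nat.strong_induction_on generalizing a b d u v with
  | _ w ih =>
  subst h
  cases u with
  | zero =>
    rw [hermiteInterp_zero_left, hermiteInterp_zero_left, sum_range_succ]
    ring
  | succ u =>
    have hleft := ih (u + v) (by omega) hab hd u v rfl
    have hright : hermiteInterp a b d (u + 1) v - hermiteInterp a b d u v =
        C (d (u + 1) v) * (X - C a) ^ u * (X - C b) ^ v := by
      rw [hermiteInterp_swap (u := u + 1), hermiteInterp_swap (u := u)]
      linear_combination ih (v + u) (by omega) hab.symm hd.swap v u rfl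
    have hba : (C b - C a) * C (b - a)⁻¹ = (1 : ℝ[X]) := by
      rw [← C_sub, ← C_mul, mul_inv_cancel₀ (sub_ne_zero.mpr hab.symm), C_1]
    have hrec : C (d u (v + 1)) - C (d (u + 1) v) = (C b - C a) * C (d (u + 1) (v + 1)) := by
      rw [hd, ← C_sub, ← C_sub, ← C_mul, mul_div_cancel₀ _ (sub_ne_zero.mpr hab.symm)]
    rw [hermiteInterp_succ_succ]
    linear_combination (C (b - a)⁻¹ * (X - C a)) * hleft
      - (C (b - a)⁻¹ * (X - C b) + 1) * hright
      + (C (b - a)⁻¹ * (X - C a) * (X - C a) ^ u * (X - C b) ^ v) * hrec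
      + (hermiteInterp a b d u v + C (d (u + 1) v) * (X - C a) ^ u * (X - C b) ^ v
          + C (d (u + 1) (v + 1)) * (X - C a) ^ (u + 1) * (X - C b) ^ v) * hba

lemma hermiteInterp_eq_sum (hab : a ≠ b) (hd : IsDivDiffTable a b d) (u v : ℕ) :
    hermiteInterp a b d u v = ∑ k ∈ range u, C (d (k + 1) 0) * (X - C a) ^ k +
      ∑ k ∈ range v, C (d u (k + 1)) * (X - C a) ^ u * (X - C b) ^ k := by
  induction v with
  | zero => rw [hermiteInterp_zero_right, range_zero, sum_empty, add_zero]
  | succ v ih =>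
    rw [sum_range_succ, ← add_assoc, ← ih, ← hermiteInterp_succ_right_sub hab hd]
    ring

lemma degree_hermiteInterp_lt (hab : a ≠ b) (hd : IsDivDiffTable a b d) (u v : ℕ) :
    (hermiteInterp a b d u v).degree < ↑(u + v) := by
  rw [hermiteInterp_eq_sum hab hd, ← mem_degreeLT]
  refine add_mem (sum_mem fun k hk => ?_) (sum_mem fun k hk => ?_) <;>
    rw [mem_degreeLT] <;> have := mem_range.mp hk <;> compute_degree
  · exact Nat.cast_lt.mpr (by omega)
  · exact Nat.cast_lt.mpr (show u + k < u + v by omega)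

lemma eval_iterate_derivative_hermiteInterp_left (hab : a ≠ b) (hd : IsDivDiffTable a b d)
    {u j : ℕ} (v : ℕ) (hj : j < u) :
    (derivative^[j] (hermiteInterp a b d u v)).eval a = j ! * d (j + 1) 0 := by
  have hdvd : (X - C a) ^ u ∣ ∑ k ∈ range v, C (d u (k + 1)) * (X - C a) ^ u * (X - C b) ^ k :=
    dvd_sum fun k _ => (dvd_mul_left _ _).mul_right _
  rw [hermiteInterp_eq_sum hab hd, iterate_map_add, eval_add,
    eval_iterate_derivative_sum_C_mul_X_sub_C_pow a _ hj,
    eval_iterate_derivative_eq_zero_of_pow_dvd hdvd hj, add_zero]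

lemma eval_iterate_derivative_hermiteInterp_right (hab : a ≠ b) (hd : IsDivDiffTable a b d)
    {v j : ℕ} (u : ℕ) (hj : j < v) :
    (derivative^[j] (hermiteInterp a b d u v)).eval b = j ! * d 0 (j + 1) := by
  rw [hermiteInterp_swap]
  exact eval_iterate_derivative_hermiteInterp_left hab.symm hd.swap u hj

end Hermite

lemma divDiff_singleton (s : Set ℝ) (f : ℝ → ℝ) (x : ℝ) : divDiff s f [x] = f x := by
  rw [divDiff]

lemma divDiff_replicate (s : Set ℝ) (f : ℝ → ℝ) (c : ℝ) (k : ℕ) :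
    divDiff s f (List.replicate (k + 1) c) = iteratedDerivWithin k f s c / k ! := by
  cases k with
  | zero => simp [divDiff]
  | succ k =>
    show divDiff s f (c :: c :: List.replicate k c) = _
    rw [divDiff, if_pos]
    · simp
    · exact (List.getLast_replicate (n := k + 1) _).symm

lemma divDiff_pair_self (s : Set ℝ) (f : ℝ → ℝ) (x : ℝ) :
    divDiff s f [x, x] = iteratedDerivWithin 1 f s x := by
  simpa using divDiff_replicate s f x 1

lemma divDiff_cons_of_ne_getLast (s : Set ℝ) (f : ℝ → ℝ) (x : ℝ) {l : List ℝ} (hl : l ≠ [])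
    (hx : x ≠ l.getLast hl) :
    divDiff s f (x :: l) =
      (divDiff s f l - divDiff s f (x :: l.dropLast)) / (l.getLast hl - x) := by
  obtain ⟨y, l, rfl⟩ := List.exists_cons_of_ne_nil hl
  rw [divDiff, if_neg hx]

noncomputable def divDiffTable (s : Set ℝ) (f : ℝ → ℝ) (a b : ℝ) (u v : ℕ) : ℝ :=
  divDiff s f (List.replicate u a ++ List.replicate v b)

section DivDiffTable
variable (s : Set ℝ) (f : ℝ → ℝ) {a b : ℝ}

lemma divDiffTable_succ_zero (k : ℕ) :
    divDiffTable s f a b (k + 1) 0 = iteratedDerivWithin k f s a / k ! := by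
  rw [divDiffTable, List.replicate_zero, List.append_nil, divDiff_replicate]

lemma divDiffTable_zero_succ (k : ℕ) :
    divDiffTable s f a b 0 (k + 1) = iteratedDerivWithin k f s b / k ! := by
  rw [divDiffTable, List.replicate_zero, List.nil_append, divDiff_replicate]

lemma isDivDiffTable_divDiffTable (hab : a ≠ b) : IsDivDiffTable a b (divDiffTable s f a b) := by
  intro u v
  have hne : List.replicate u a ++ List.replicate (v + 1) b ≠ [] := by simp
  have hlast : (List.replicate u a ++ List.replicate (v + 1) b).getLast hne = b := by
    simp [List.getLast_append_of_ne_nil]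
  simp only [divDiffTable]
  rw [List.replicate_succ, List.cons_append,
    divDiff_cons_of_ne_getLast s f a hne (by rw [hlast]; exact hab), hlast,
    List.dropLast_append_of_ne_nil (by simp), List.dropLast_replicate, Nat.add_sub_cancel]
  rfl

end DivDiffTable

lemma exists_finset_deriv_eq_zero {h : ℝ → ℝ} {a b : ℝ} (hc : ContinuousOn h (Icc a b))
    {s : Finset ℝ} (hs : ↑s ⊆ Icc a b) (hzero : ∀ x ∈ s, h x = 0) :
    ∃ t : Finset ℝ, ↑t ⊆ Ioo a b ∧ (∀ z ∈ t, deriv h z = 0) ∧ #s ≤ #t + 1 := by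
  have rolle : ∀ x y, ∃ z, x ∈ s → y ∈ s → x < y → z ∈ Ioo x y ∧ deriv h z = 0 := by
    intro x y
    by_cases H : x ∈ s ∧ y ∈ s ∧ x < y
    · obtain ⟨hx, hy, hxy⟩ := H
      obtain ⟨z, hz, hz'⟩ := exists_deriv_eq_zero hxy
        (hc.mono (Icc_subset_Icc (hs hx).1 (hs hy).2)) ((hzero x hx).trans (hzero y hy).symm)
      exact ⟨z, fun _ _ _ => ⟨hz, hz'⟩⟩
    · exact ⟨0, fun hx hy hxy => absurd ⟨hx, hy, hxy⟩ H⟩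
  choose z hz using rolle
  have mem_t : ∀ w ∈ ((s ×ˢ s).filter (fun p => p.1 < p.2)).image (fun p => z p.1 p.2),
      ∃ x ∈ s, ∃ y ∈ s, w ∈ Ioo x y ∧ deriv h w = 0 := by
    simp only [Finset.mem_image, mem_filter, mem_product]
    rintro _ ⟨⟨x, y⟩, ⟨⟨hx, hy⟩, hxy⟩, rfl⟩
    exact ⟨x, hx, y, hy, hz x y hx hy hxy⟩
  refine ⟨((s ×ˢ s).filter (fun p => p.1 < p.2)).image (fun p => z p.1 p.2), ?_, ?_, ?_⟩
  · intro w hw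
    obtain ⟨x, hx, y, hy, hw, -⟩ := mem_t w hw
    exact ⟨(hs hx).1.trans_lt hw.1, hw.2.trans_le (hs hy).2⟩
  · intro w hw
    obtain ⟨-, -, -, -, -, hw⟩ := mem_t w hw
    exact hw
  · refine card_le_of_interleaved fun x hx y hy hxy _ => ⟨z x y, ?_, (hz x y hx hy hxy).1⟩
    exact Finset.mem_image.mpr ⟨(x, y), mem_filter.mpr ⟨mem_product.mpr ⟨hx, hy⟩, hxy⟩, rfl⟩

lemma exists_finset_zero_Icc {h : ℝ → ℝ} {a b : ℝ} (hab : a < b) {p q : ℕ} {s : Finset ℝ}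
    (hs : ↑s ⊆ Ioo a b) (hzero : ∀ x ∈ s, h x = 0) (ha : 0 < p → h a = 0)
    (hb : 0 < q → h b = 0) :
    ∃ S : Finset ℝ, ↑S ⊆ Icc a b ∧ (∀ x ∈ S, h x = 0) ∧ #s + min p 1 + min q 1 ≤ #S := by
  have has : a ∉ s := fun h => (hs h).1.false
  have hbs : b ∉ s := fun h => (hs h).2.false
  have hIcc : ↑s ⊆ Icc a b := hs.trans Ioo_subset_Icc_self
  have haI : a ∈ Icc a b := left_mem_Icc.mpr hab.le
  have hbI : b ∈ Icc a b := right_mem_Icc.mpr hab.le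
  rcases Nat.eq_zero_or_pos p with rfl | hp <;> rcases Nat.eq_zero_or_pos q with rfl | hq
  · exact ⟨s, hIcc, hzero, by simp⟩
  · refine ⟨insert b s, ?_, (forall_mem_insert _ _ _).mpr ⟨hb hq, hzero⟩, ?_⟩
    · rw [coe_insert]; exact Set.insert_subset hbI hIcc
    · rw [card_insert_of_notMem hbs]; omega
  · refine ⟨insert a s, ?_, (forall_mem_insert _ _ _).mpr ⟨ha hp, hzero⟩, ?_⟩
    · rw [coe_insert]; exact Set.insert_subset haI hIcc
    · rw [card_insert_of_notMem has]; omega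
  · refine ⟨insert a (insert b s), ?_, (forall_mem_insert _ _ _).mpr
      ⟨ha hp, (forall_mem_insert _ _ _).mpr ⟨hb hq, hzero⟩⟩, ?_⟩
    · rw [coe_insert, coe_insert]; exact Set.insert_subset haI (Set.insert_subset hbI hIcc)
    · rw [card_insert_of_notMem (by simp [has, hab.ne]), card_insert_of_notMem hbs]; omega

theorem exists_iteratedDerivWithin_eq_zero {a b : ℝ} (hab : a < b) (N : ℕ) {h : ℝ → ℝ}
    (hh : ContDiffOn ℝ N h (Icc a b)) {p q : ℕ} {s : Finset ℝ} (hs : ↑s ⊆ Ioo a b)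
    (hzero : ∀ x ∈ s, h x = 0) (ha : ∀ j < p, iteratedDerivWithin j h (Icc a b) a = 0)
    (hb : ∀ j < q, iteratedDerivWithin j h (Icc a b) b = 0) (hcard : N + 1 ≤ p + q + #s) :
    ∃ ξ ∈ Icc a b, iteratedDerivWithin N h (Icc a b) ξ = 0 := by
  induction N generalizing h p q s with
  | zero =>
    obtain ⟨S, hSsub, hSzero, hScard⟩ := exists_finset_zero_Icc hab hs hzero
      (by simpa using ha 0) (by simpa using hb 0)
    obtain ⟨ξ, hξ⟩ : S.Nonempty := card_pos.mp (by omega)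
    exact ⟨ξ, hSsub hξ, by simpa using hSzero ξ hξ⟩
  | succ N ih =>
    obtain ⟨S, hSsub, hSzero, hScard⟩ := exists_finset_zero_Icc hab hs hzero
      (by simpa using ha 0) (by simpa using hb 0)
    obtain ⟨t, hts, htzero, htcard⟩ := exists_finset_deriv_eq_zero hh.continuousOn hSsub hSzero
    rw [iteratedDerivWithin_succ']
    refine ih (hh.derivWithin (uniqueDiffOn_Icc hab) (by norm_cast)) hts (fun z hz => ?_)
      (p := p - 1) (q := q - 1)
      (fun j hj => by rw [← iteratedDerivWithin_succ']; exact ha (j + 1) (by omega))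
      (fun j hj => by rw [← iteratedDerivWithin_succ']; exact hb (j + 1) (by omega)) (by omega)
    rw [derivWithin_of_mem_nhds (Icc_mem_nhds (hts hz).1 (hts hz).2)]
    exact htzero z hz

lemma Polynomial.contDiff_eval (p : ℝ[X]) (n : WithTop ℕ∞) : ContDiff ℝ n fun y => p.eval y := by
  simpa using p.contDiff_aeval (𝕜 := ℝ) n

lemma iteratedDerivWithin_eval (p : ℝ[X]) {s : Set ℝ} (hs : UniqueDiffOn ℝ s) {x : ℝ}
    (hx : x ∈ s) (n : ℕ) :
    iteratedDerivWithin n (fun y => p.eval y) s x = (derivative^[n] p).eval x := by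
  rw [iteratedDerivWithin_eq_iteratedDeriv hs (p.contDiff_eval n).contDiffAt hx]
  induction n generalizing p with
  | zero => simp
  | succ n ih =>
    rw [iteratedDeriv_succ', show deriv (fun y => p.eval y) = fun y => p.derivative.eval y from
      funext fun y => p.deriv, ih, Function.iterate_succ_apply]

lemma iteratedDerivWithin_sub_eval {f : ℝ → ℝ} {s : Set ℝ} (hs : UniqueDiffOn ℝ s) {x : ℝ}
    (hx : x ∈ s) {n : ℕ} (hf : ContDiffOn ℝ n f s) (p : ℝ[X]) :
    iteratedDerivWithin n (f - fun y => p.eval y) s x =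
      iteratedDerivWithin n f s x - (derivative^[n] p).eval x := by
  rw [iteratedDerivWithin_sub hx hs (hf x hx) (p.contDiff_eval n).contDiffWithinAt,
    iteratedDerivWithin_eval p hs hx]

theorem exists_iteratedDerivWithin_eq_of_hermite {f : ℝ → ℝ} {a b : ℝ} (hab : a < b) {u v : ℕ}
    (hf : ContDiffOn ℝ (u + v : ℕ) f (Icc a b)) {P : ℝ[X]} (hP : P.degree < ↑(u + v))
    (hPa : ∀ j < u, (derivative^[j] P).eval a = iteratedDerivWithin j f (Icc a b) a)
    (hPb : ∀ j < v, (derivative^[j] P).eval b = iteratedDerivWithin j f (Icc a b) b)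
    {x : ℝ} (hx : x ∈ Ioo a b) {c : ℝ} (hfx : f x = P.eval x + c * ((x - a) ^ u * (x - b) ^ v)) :
    ∃ ξ ∈ Icc a b, iteratedDerivWithin (u + v) f (Icc a b) ξ = c * (u + v)! := by
  have hs : UniqueDiffOn ℝ (Icc a b) := uniqueDiffOn_Icc hab
  set w : ℝ[X] := (X - C a) ^ u * (X - C b) ^ v
  set Q := P + C c * w
  have hwmonic : w.Monic := ((monic_X_sub_C a).pow u).mul ((monic_X_sub_C b).pow v)
  have hwdeg : w.natDegree = u + v := by
    rw [Monic.natDegree_mul ((monic_X_sub_C a).pow u) ((monic_X_sub_C b).pow v),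
      (monic_X_sub_C a).natDegree_pow, (monic_X_sub_C b).natDegree_pow, natDegree_X_sub_C,
      natDegree_X_sub_C, mul_one, mul_one]
  have hQa : ∀ j < u, iteratedDerivWithin j (f - fun y => Q.eval y) (Icc a b) a = 0 := by
    intro j hj
    rw [iteratedDerivWithin_sub_eval hs (left_mem_Icc.mpr hab.le) (hf.of_le (by norm_cast; omega)),
      iterate_map_add, iterate_derivative_C_mul, eval_add, eval_mul, hPa j hj,
      eval_iterate_derivative_eq_zero_of_pow_dvd (dvd_mul_right _ _) hj, mul_zero, add_zero,
      sub_self]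
  have hQb : ∀ j < v, iteratedDerivWithin j (f - fun y => Q.eval y) (Icc a b) b = 0 := by
    intro j hj
    rw [iteratedDerivWithin_sub_eval hs (right_mem_Icc.mpr hab.le) (hf.of_le (by norm_cast; omega)),
      iterate_map_add, iterate_derivative_C_mul, eval_add, eval_mul, hPb j hj,
      eval_iterate_derivative_eq_zero_of_pow_dvd (dvd_mul_left _ _) hj, mul_zero, add_zero,
      sub_self]
  have hQx : (f - fun y => Q.eval y) x = 0 := by simp [Q, w, hfx]
  obtain ⟨ξ, hξ, hξ0⟩ := exists_iteratedDerivWithin_eq_zero hab (u + v)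
    (h := f - fun y => Q.eval y) (hf.sub (Q.contDiff_eval _).contDiffOn) (s := {x})
    (by simpa using hx) (by simpa using hQx) hQa hQb (by simp)
  rw [iteratedDerivWithin_sub_eval hs hξ hf, iterate_map_add, iterate_derivative_C_mul,
    iterate_derivative_eq_zero_of_degree_lt hP, ← hwdeg, hwmonic.iterate_derivative_natDegree,
    hwdeg, zero_add, eval_mul, eval_C, eval_C, sub_eq_zero] at hξ0
  exact ⟨ξ, hξ, hξ0⟩

theorem exists_sub_eval_eq_mul_of_hermite {f : ℝ → ℝ} {a b : ℝ} (hab : a < b) {u v : ℕ}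
    (hu : 0 < u) (hv : 0 < v) (hf : ContDiffOn ℝ (u + v : ℕ) f (Icc a b)) {P : ℝ[X]}
    (hP : P.degree < ↑(u + v))
    (hPa : ∀ j < u, (derivative^[j] P).eval a = iteratedDerivWithin j f (Icc a b) a)
    (hPb : ∀ j < v, (derivative^[j] P).eval b = iteratedDerivWithin j f (Icc a b) b)
    {x : ℝ} (hx : x ∈ Icc a b) :
    ∃ ξ ∈ Icc a b, f x - P.eval x =
      iteratedDerivWithin (u + v) f (Icc a b) ξ / (u + v)! * ((x - a) ^ u * (x - b) ^ v) := by
  by_cases hxI : x ∈ Ioo a b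
  · have hw : (x - a) ^ u * (x - b) ^ v ≠ 0 :=
      mul_ne_zero (pow_ne_zero _ (sub_pos.mpr hxI.1).ne') (pow_ne_zero _ (sub_neg.mpr hxI.2).ne)
    obtain ⟨ξ, hξ, hξf⟩ := exists_iteratedDerivWithin_eq_of_hermite hab hf hP hPa hPb hxI
      (c := (f x - P.eval x) / ((x - a) ^ u * (x - b) ^ v)) (by rw [div_mul_cancel₀ _ hw]; ring)
    refine ⟨ξ, hξ, ?_⟩
    rw [hξf, mul_div_cancel_right₀ _ (by positivity), div_mul_cancel₀ _ hw]
  · obtain rfl | rfl : x = a ∨ x = b := by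
      by_contra! h
      exact hxI ⟨hx.1.lt_of_ne h.1.symm, hx.2.lt_of_ne h.2⟩
    · have h0 := hPa 0 hu
      simp only [Function.iterate_zero, id_eq, iteratedDerivWithin_zero] at h0
      exact ⟨x, hx, by simp [h0, hu.ne']⟩
    · have h0 := hPb 0 hv
      simp only [Function.iterate_zero, id_eq, iteratedDerivWithin_zero] at h0
      exact ⟨x, hx, by simp [h0, hv.ne']⟩

section Sign
variable {f : ℝ → ℝ} {a b : ℝ} {u v : ℕ}

theorem exists_nonneg_sub_eval_hermiteInterp_divDiffTable (hab : a < b) (hu : 0 < u)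
    (hv : 0 < v) (hf : ContDiffOn ℝ (u + v : ℕ) f (Icc a b))
    (hconv : ∀ x ∈ Icc a b, 0 ≤ iteratedDerivWithin (u + v) f (Icc a b) x) {x : ℝ}
    (hx : x ∈ Icc a b) :
    ∃ c ≥ 0, f x - (hermiteInterp a b (divDiffTable (Icc a b) f a b) u v).eval x =
      c * ((x - a) ^ u * (x - b) ^ v) := by
  have hd := isDivDiffTable_divDiffTable (Icc a b) f hab.ne
  obtain ⟨ξ, hξ, hfx⟩ := exists_sub_eval_eq_mul_of_hermite hab hu hv hf
    (degree_hermiteInterp_lt hab.ne hd u v)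
    (fun j hj => by
      rw [eval_iterate_derivative_hermiteInterp_left hab.ne hd v hj, divDiffTable_succ_zero,
        mul_div_cancel₀ _ (by positivity)])
    (fun j hj => by
      rw [eval_iterate_derivative_hermiteInterp_right hab.ne hd u hj, divDiffTable_zero_succ,
        mul_div_cancel₀ _ (by positivity)]) hx
  exact ⟨_, div_nonneg (hconv ξ hξ) (by positivity), hfx⟩

theorem eval_hermiteInterp_divDiffTable_le (hab : a < b) (hu : 0 < u) (hv : 0 < v)
    (hveven : Even v) (hf : ContDiffOn ℝ (u + v : ℕ) f (Icc a b))
    (hconv : ∀ x ∈ Icc a b, 0 ≤ iteratedDerivWithin (u + v) f (Icc a b) x) {x : ℝ}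
    (hx : x ∈ Icc a b) :
    (hermiteInterp a b (divDiffTable (Icc a b) f a b) u v).eval x ≤ f x := by
  obtain ⟨c, hc, hfx⟩ := exists_nonneg_sub_eval_hermiteInterp_divDiffTable hab hu hv hf hconv hx
  have := mul_nonneg hc <|
    mul_nonneg (pow_nonneg (sub_nonneg.mpr hx.1) u) (hveven.pow_nonneg (x - b))
  linarith

theorem le_eval_hermiteInterp_divDiffTable (hab : a < b) (hu : 0 < u) (hv : 0 < v)
    (hvodd : Odd v) (hf : ContDiffOn ℝ (u + v : ℕ) f (Icc a b))
    (hconv : ∀ x ∈ Icc a b, 0 ≤ iteratedDerivWithin (u + v) f (Icc a b) x) {x : ℝ}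
    (hx : x ∈ Icc a b) :
    f x ≤ (hermiteInterp a b (divDiffTable (Icc a b) f a b) u v).eval x := by
  obtain ⟨c, hc, hfx⟩ := exists_nonneg_sub_eval_hermiteInterp_divDiffTable hab hu hv hf hconv hx
  have := mul_nonpos_of_nonneg_of_nonpos hc <| mul_nonpos_of_nonneg_of_nonpos
    (pow_nonneg (sub_nonneg.mpr hx.1) u) (hvodd.pow_nonpos (sub_nonpos.mpr hx.2))
  linarith

end Sign

section PositiveFunctional
variable {E : Type*} (A : (E → ℝ) →ₗ[ℝ] ℝ) (g : E → ℝ) {a b : ℝ} {d : ℕ → ℕ → ℝ}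

lemma LinearMap.map_mono_of_map_nonneg (hApos : ∀ h : E → ℝ, (∀ t, 0 ≤ h t) → 0 ≤ A h)
    {h₁ h₂ : E → ℝ} (h : ∀ t, h₁ t ≤ h₂ t) : A h₁ ≤ A h₂ := by
  have := hApos (h₂ - h₁) fun t => sub_nonneg.mpr (h t)
  rwa [map_sub, sub_nonneg] at this

lemma map_eval_hermiteInterp (hab : a ≠ b) (hd : IsDivDiffTable a b d) (u v : ℕ) :
    A (fun t => (hermiteInterp a b d u v).eval (g t)) =
      ∑ k ∈ range u, d (k + 1) 0 * A (fun t => (g t - a) ^ k) +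
      ∑ k ∈ range v, d u (k + 1) * A (fun t => (g t - a) ^ u * (g t - b) ^ k) := by
  have hfun : (fun t => (hermiteInterp a b d u v).eval (g t)) =
      ∑ k ∈ range u, d (k + 1) 0 • (fun t => (g t - a) ^ k) +
      ∑ k ∈ range v, d u (k + 1) • (fun t => (g t - a) ^ u * (g t - b) ^ k) := by
    ext t
    simp [hermiteInterp_eq_sum hab hd, eval_finsetSum, mul_assoc]
  simp only [hfun, map_add, map_sum, map_smul, smul_eq_mul]

lemma map_eval_hermiteInterp_sub_chord (hA1 : A (fun _ => (1 : ℝ)) = 1) (hab : a ≠ b)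
    (hd : IsDivDiffTable a b d) {m : ℕ} (hm : 2 ≤ m) (q : ℕ) :
    A (fun t => (hermiteInterp a b d m q).eval (g t)) - (b - A g) / (b - a) * d 1 0 -
      (A g - a) / (b - a) * d 0 1 =
    (A g - a) * (d 2 0 - d 1 1) +
      ∑ k ∈ Finset.Icc 2 (m - 1), d (k + 1) 0 * A (fun t => (g t - a) ^ k) +
      ∑ k ∈ Finset.Icc 1 q, d m k * A (fun t => (g t - a) ^ m * (g t - b) ^ (k - 1)) := by
  have hA1' : A (fun t => (g t - a) ^ 1) = A g - a := by
    have : (fun t => (g t - a) ^ 1) = g - a • fun _ => (1 : ℝ) := by ext t; simp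
    rw [this, map_sub, map_smul, hA1, smul_eq_mul, mul_one]
  obtain ⟨m, rfl⟩ := Nat.exists_eq_add_of_le' hm
  rw [map_eval_hermiteInterp A g hab hd, sum_range_succ', sum_range_succ', hd 0 0,
    ← Finset.Ico_add_one_right_eq_Icc, ← Finset.Ico_add_one_right_eq_Icc,
    sum_Ico_eq_sum_range, sum_Ico_eq_sum_range, show m + 2 - 1 + 1 - 2 = m by omega,
    Nat.add_sub_cancel]
  have e1 : ∀ k, 2 + k = k + 1 + 1 := fun k => by omega
  have e2 : ∀ k, 1 + k = k + 1 := fun k => by omega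
  simp only [e1, e2, Nat.add_sub_cancel, zero_add, pow_zero, hA1, hA1']
  field_simp [sub_ne_zero.mpr hab.symm]
  ring

variable (s : Set ℝ) (f : ℝ → ℝ)

lemma map_eval_hermiteInterp_divDiffTable_sub_chord_left (hA1 : A (fun _ => (1 : ℝ)) = 1)
    (hab : a ≠ b) {m : ℕ} (hm : 2 ≤ m) (q : ℕ) :
    A (fun t => (hermiteInterp a b (divDiffTable s f a b) m q).eval (g t)) -
      (b - A g) / (b - a) * f a - (A g - a) / (b - a) * f b =
    (A g - a) * (divDiff s f [a, a] - divDiff s f [a, b]) +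
      ∑ k ∈ Finset.Icc 2 (m - 1), iteratedDerivWithin k f s a / k ! * A (fun t => (g t - a) ^ k) +
      ∑ k ∈ Finset.Icc 1 q, divDiff s f (List.replicate m a ++ List.replicate k b) *
        A (fun t => (g t - a) ^ m * (g t - b) ^ (k - 1)) := by
  have h := map_eval_hermiteInterp_sub_chord A g hA1 hab (isDivDiffTable_divDiffTable s f hab) hm q
  simp only [divDiffTable, List.replicate_zero, List.append_nil, List.nil_append,
    List.replicate_one, List.singleton_append, divDiff_singleton, divDiff_replicate,
    Nat.factorial_one, Nat.cast_one, div_one] at h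
  rw [divDiff_pair_self]
  exact h

lemma map_eval_hermiteInterp_divDiffTable_sub_chord_right (hA1 : A (fun _ => (1 : ℝ)) = 1)
    (hab : a ≠ b) {m : ℕ} (hm : 2 ≤ m) (q : ℕ) :
    A (fun t => (hermiteInterp a b (divDiffTable s f a b) q m).eval (g t)) -
      (b - A g) / (b - a) * f a - (A g - a) / (b - a) * f b =
    (b - A g) * (divDiff s f [a, b] - divDiff s f [b, b]) +
      ∑ k ∈ Finset.Icc 2 (m - 1), iteratedDerivWithin k f s b / k ! * A (fun t => (g t - b) ^ k) +
      ∑ k ∈ Finset.Icc 1 q, divDiff s f (List.replicate k a ++ List.replicate m b) *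
        A (fun t => (g t - b) ^ m * (g t - a) ^ (k - 1)) := by
  have h := map_eval_hermiteInterp_sub_chord A g hA1 hab.symm
    (isDivDiffTable_divDiffTable s f hab).swap hm q
  simp only [divDiffTable, List.replicate_zero, List.append_nil, List.nil_append,
    List.replicate_one, List.singleton_append, divDiff_singleton, divDiff_replicate,
    Nat.factorial_one, Nat.cast_one, div_one] at h
  rw [divDiff_pair_self, hermiteInterp_swap]
  simp only [divDiffTable]
  have hba : b - a ≠ 0 := sub_ne_zero.mpr hab.symm
  have hab' : a - b ≠ 0 := sub_ne_zero.mpr hab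
  field_simp at h ⊢
  linear_combination -h

end PositiveFunctional

theorem cor21_general {E : Type*}
    (a b : ℝ) (hab : a < b) (n m : ℕ) (hnodd : Odd n) (hm : 3 ≤ m) (hmn : m + 1 ≤ n)
    (hmodd : Odd m)
    (f : ℝ → ℝ) (hf : ContDiffOn ℝ n f (Set.Icc a b))
    (hconv : ∀ x ∈ Set.Icc a b, 0 ≤ iteratedDerivWithin n f (Set.Icc a b) x)
    (A : (E → ℝ) →ₗ[ℝ] ℝ)
    (hApos : ∀ h : E → ℝ, (∀ t, 0 ≤ h t) → 0 ≤ A h)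
    (hA1 : A (fun _ => (1 : ℝ)) = 1)
    (g : E → ℝ) (hg : ∀ t, g t ∈ Set.Icc a b) :
    (A g - a) * (divDiff (Set.Icc a b) f [a, a] - divDiff (Set.Icc a b) f [a, b]) +
      (∑ k ∈ Finset.Icc 2 (m - 1),
        iteratedDerivWithin k f (Set.Icc a b) a / Nat.factorial k *
          A (fun t => (g t - a) ^ k)) +
      (∑ k ∈ Finset.Icc 1 (n - m),
        divDiff (Set.Icc a b) f (List.replicate m a ++ List.replicate k b) *
          A (fun t => (g t - a) ^ m * (g t - b) ^ (k - 1))) ≤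
    A (fun t => f (g t)) - (b - A g) / (b - a) * f a - (A g - a) / (b - a) * f b ∧
    A (fun t => f (g t)) - (b - A g) / (b - a) * f a - (A g - a) / (b - a) * f b ≤
      (b - A g) * (divDiff (Set.Icc a b) f [a, b] - divDiff (Set.Icc a b) f [b, b]) +
      (∑ k ∈ Finset.Icc 2 (m - 1),
        iteratedDerivWithin k f (Set.Icc a b) b / Nat.factorial k *
          A (fun t => (g t - b) ^ k)) +
      ∑ k ∈ Finset.Icc 1 (n - m),
        divDiff (Set.Icc a b) f (List.replicate k a ++ List.replicate m b) *
          A (fun t => (g t - b) ^ m * (g t - a) ^ (k - 1)) := by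
  have hsplit : m + (n - m) = n := by omega
  have hsplit' : n - m + m = n := by omega
  constructor
  · rw [← map_eval_hermiteInterp_divDiffTable_sub_chord_left A g _ f hA1 hab.ne (by omega)]
    gcongr ?_ - _ - _
    exact A.map_mono_of_map_nonneg hApos fun t => eval_hermiteInterp_divDiffTable_le hab
      (by omega) (by omega) (Nat.Odd.sub_odd hnodd hmodd) (by rwa [hsplit]) (by rwa [hsplit]) (hg t)
  · rw [← map_eval_hermiteInterp_divDiffTable_sub_chord_right A g _ f hA1 hab.ne (by omega)]
    gcongr ?_ - _ - _
    exact A.map_mono_of_map_nonneg hApos fun t => le_eval_hermiteInterp_divDiffTable hab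
      (by omega) (by omega) hmodd (by rwa [hsplit']) (by rwa [hsplit']) (hg t)

/-- Corollary 2.1: two-sided Edmundson–Lah–Ribarič type bounds for `n`-convex
functions with `n` odd and `3 ≤ m ≤ n-1` odd. -/
theorem cor21 {E : Type*} [Nonempty E]
    (a b : ℝ) (hab : a < b) (n m : ℕ) (hnodd : Odd n) (hm : 3 ≤ m) (hmn : m + 1 ≤ n)
    (hmodd : Odd m)
    (f : ℝ → ℝ) (hf : ContDiffOn ℝ n f (Set.Icc a b))
    (hconv : ∀ x ∈ Set.Icc a b, 0 ≤ iteratedDerivWithin n f (Set.Icc a b) x)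
    (A : (E → ℝ) →ₗ[ℝ] ℝ)
    (hApos : ∀ h : E → ℝ, (∀ t, 0 ≤ h t) → 0 ≤ A h)
    (hA1 : A (fun _ => (1 : ℝ)) = 1)
    (g : E → ℝ) (hg : ∀ t, g t ∈ Set.Icc a b) :
    (A g - a) * (divDiff (Set.Icc a b) f [a, a] - divDiff (Set.Icc a b) f [a, b]) +
      (∑ k ∈ Finset.Icc 2 (m - 1),
        iteratedDerivWithin k f (Set.Icc a b) a / Nat.factorial k *
          A (fun t => (g t - a) ^ k)) +
      (∑ k ∈ Finset.Icc 1 (n - m),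
        divDiff (Set.Icc a b) f (List.replicate m a ++ List.replicate k b) *
          A (fun t => (g t - a) ^ m * (g t - b) ^ (k - 1))) ≤
    A (fun t => f (g t)) - (b - A g) / (b - a) * f a - (A g - a) / (b - a) * f b ∧
    A (fun t => f (g t)) - (b - A g) / (b - a) * f a - (A g - a) / (b - a) * f b ≤
      (b - A g) * (divDiff (Set.Icc a b) f [a, b] - divDiff (Set.Icc a b) f [b, b]) +
      (∑ k ∈ Finset.Icc 2 (m - 1),
        iteratedDerivWithin k f (Set.Icc a b) b / Nat.factorial k *
          A (fun t => (g t - b) ^ k)) +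
      ∑ k ∈ Finset.Icc 1 (n - m),
        divDiff (Set.Icc a b) f (List.replicate k a ++ List.replicate m b) *
          A (fun t => (g t - b) ^ m * (g t - a) ^ (k - 1)) :=
  cor21_general a b hab n m hnodd hm hmn hmodd f hf hconv A hApos hA1 g hg
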